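/- arXiv:2406.01510 — 6 statements merged into one kernel-verified Lean document; each statement's English description precedes it below -/
import Mathlib

section
/- A polynomial f in n variables is quasisymmetric if and only if R_1(f) = R_2(f) = ... = R_n(f), where R_i(f) is obtained from f by setting x_i = 0 and shifting x_j to x_{j-1} for all j > i. -/
open MvPolynomial

/-- The Bergeron–Sottile map `R i` (1-based `i`): set the variable `x_i` to zero
and shift every later variable down by one.  Variables are 0-indexed: `X j`
represents `x_{j+1}`. -/
noncomputable def R (i : ℕ) : MvPolynomial ℕ ℤ →ₐ[ℤ] MvPolynomial ℕ ℤ :=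
  aeval (fun j => if j + 1 < i then X j else if j + 1 = i then 0 else X (j - 1))

/-- `f` only involves the variables `x_1, …, x_n`. -/
def InVars (n : ℕ) (f : MvPolynomial ℕ ℤ) : Prop :=
  ∀ d ∈ f.support, ∀ j, n ≤ j → d j = 0

/-- `f` is a quasisymmetric polynomial in the variables `x_1, …, x_n`:
for any exponents `a_1, …, a_k ≥ 1`, the coefficients of
`x_{i_1}^{a_1} ⋯ x_{i_k}^{a_k}` and `x_{j_1}^{a_1} ⋯ x_{j_k}^{a_k}` agree for all
strictly increasing choices of indices among the first `n` variables. -/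
def IsQSym (n : ℕ) (f : MvPolynomial ℕ ℤ) : Prop :=
  ∀ (k : ℕ) (a : Fin k → ℕ), (∀ l, 1 ≤ a l) →
    ∀ (i j : Fin k → ℕ), StrictMono i → StrictMono j →
      (∀ l, i l < n) → (∀ l, j l < n) →
      coeff (∑ l, Finsupp.single (i l) (a l)) f =
        coeff (∑ l, Finsupp.single (j l) (a l)) f

/-!
Skipping the index `p` is an order embedding `succAbove p : ℕ → ℕ`, and `R (p + 1)` is the
corresponding `killCompl`, so `coeff e (R (p + 1) f) = coeff (e.mapDomain (succAbove p)) f`.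

If `f` is quasisymmetric, the two exponent vectors obtained from `e` by inserting a zero at `p` or
at `q` carry the same nonzero exponents in the same order, so their coefficients agree; when `e`
reaches the last variable, both coefficients vanish because `f` lives in `x_1, …, x_n`.

Conversely, induct on `n`. Since `R i ∘ R (n + 1) = R n ∘ R i` for `1 ≤ i ≤ n`, the polynomial
`g = R (n + 1) f` again satisfies `R_1 g = ⋯ = R_n g`, so it is quasisymmetric in `n` variables.
A monomial in fewer than `n + 1` of the variables `x_1, …, x_{n+1}` misses some `x_{p+1}`, and its
coefficient in `f` is a coefficient of `R (p + 1) f = g` at the compressed monomial; a monomial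
using all `n + 1` variables is determined by its exponent sequence.
-/

namespace Nat

def succAbove (p t : ℕ) : ℕ := if t < p then t else t + 1

lemma succAbove_of_le {p t : ℕ} (h : p ≤ t) : succAbove p t = t + 1 := if_neg (by omega)

lemma strictMono_succAbove (p : ℕ) : StrictMono (succAbove p) := by
  intro s t h
  unfold succAbove
  split_ifs <;> omega

lemma succAbove_injective (p : ℕ) : Function.Injective (succAbove p) :=
  (strictMono_succAbove p).injective

lemma succAbove_ne (p t : ℕ) : succAbove p t ≠ p := by
  unfold succAbove
  split_ifs <;> omega

lemma exists_succAbove_eq {p t : ℕ} (h : t ≠ p) : ∃ s, succAbove p s = t :=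
  ⟨if t < p then t else t - 1, by unfold succAbove; split_ifs <;> omega⟩

end Nat

open Nat (succAbove)

lemma R_succ_eq_killCompl (p : ℕ) :
    _root_.R (p + 1) = killCompl (Nat.succAbove_injective p) := by
  refine algHom_ext fun j => ?_
  by_cases hj : j = p
  · subst hj
    have : j ∉ Set.range (succAbove j) := fun ⟨s, hs⟩ => Nat.succAbove_ne j s hs
    simp [_root_.R, killCompl, this]
  · obtain ⟨s, rfl⟩ := Nat.exists_succAbove_eq hj
    rw [← rename_X (succAbove p), killCompl_rename_app]
    simp only [_root_.R, rename_X, aeval_X, succAbove]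
    split_ifs <;> first | rfl | omega

lemma coeff_R_succ (p : ℕ) (f : MvPolynomial ℕ ℤ) (e : ℕ →₀ ℕ) :
    coeff e (R (p + 1) f) = coeff (e.mapDomain (succAbove p)) f := by
  rw [R_succ_eq_killCompl, coeff_killCompl]

lemma R_comp_R {i n : ℕ} (hi : 1 ≤ i) (hin : i ≤ n) :
    (_root_.R i).comp (_root_.R (n + 1)) = (_root_.R n).comp (_root_.R i) := by
  refine algHom_ext fun j => ?_
  simp only [_root_.R, AlgHom.comp_apply, aeval_X]
  split_ifs <;> simp only [map_zero, aeval_X] <;> split_ifs <;> first | rfl | omega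

lemma InVars.coeff_eq_zero {n : ℕ} {f : MvPolynomial ℕ ℤ} (hf : InVars n f)
    {d : ℕ →₀ ℕ} {j : ℕ} (hj : n ≤ j) (hd : d j ≠ 0) : coeff d f = 0 :=
  notMem_support_iff.1 fun hmem => hd (hf d hmem j hj)

lemma Finsupp.eq_sum_single_orderEmbOfFin {α M : Type*} [LinearOrder α] [AddCommMonoid M]
    (e : α →₀ M) :
    e = ∑ l, single (e.support.orderEmbOfFin rfl l) (e (e.support.orderEmbOfFin rfl l)) := by
  conv_lhs => rw [← e.sum_single, Finsupp.sum, ← e.support.map_orderEmbOfFin_univ rfl]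
  rw [Finset.sum_map]
  rfl

lemma IsQSym.coeff_mapDomain_eq {n : ℕ} {f : MvPolynomial ℕ ℤ} (hq : IsQSym n f)
    {φ ψ : ℕ → ℕ} (hφ : StrictMono φ) (hψ : StrictMono ψ) {e : ℕ →₀ ℕ}
    (he : ∀ t ∈ e.support, φ t < n ∧ ψ t < n) :
    coeff (e.mapDomain φ) f = coeff (e.mapDomain ψ) f := by
  set ι := e.support.orderEmbOfFin rfl
  have hι : ∀ l, ι l ∈ e.support := e.support.orderEmbOfFin_mem rfl
  rw [e.eq_sum_single_orderEmbOfFin, Finsupp.mapDomain_finsetSum, Finsupp.mapDomain_finsetSum]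
  simp only [Finsupp.mapDomain_single]
  exact hq _ _ (fun l => Nat.one_le_iff_ne_zero.2 (Finsupp.mem_support_iff.1 (hι l)))
    (φ ∘ ι) (ψ ∘ ι) (hφ.comp ι.strictMono) (hψ.comp ι.strictMono)
    (fun l => (he _ (hι l)).1) (fun l => (he _ (hι l)).2)

lemma R_eq_R_of_isQSym {n : ℕ} {f : MvPolynomial ℕ ℤ} (hf : InVars n f) (hq : IsQSym n f)
    {p q : ℕ} (hp : p < n) (hq' : q < n) : R (p + 1) f = R (q + 1) f := by
  ext e
  rw [coeff_R_succ, coeff_R_succ]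
  by_cases he : ∃ t ∈ e.support, n ≤ t + 1
  · obtain ⟨t, ht, htn⟩ := he
    have vanish : ∀ r < n, coeff (e.mapDomain (succAbove r)) f = 0 := fun r hr =>
      hf.coeff_eq_zero (j := succAbove r t) (by rw [Nat.succAbove_of_le (by omega)]; omega)
        (by rwa [Finsupp.mapDomain_apply (Nat.succAbove_injective r), ← Finsupp.mem_support_iff])
    rw [vanish p hp, vanish q hq']
  · refine hq.coeff_mapDomain_eq (Nat.strictMono_succAbove p) (Nat.strictMono_succAbove q)
      fun t ht => ?_
    have := not_le.1 fun h => he ⟨t, ht, h⟩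
    unfold succAbove
    constructor <;> split_ifs <;> omega

lemma exists_lt_notMem_range {k m : ℕ} (i : Fin k → ℕ) (hk : k < m) :
    ∃ p < m, p ∉ Set.range i := by
  by_contra! h
  have hsub : Finset.range m ⊆ Finset.univ.image i := fun p hp => by
    simpa using h p (Finset.mem_range.1 hp)
  have : m ≤ k := by simpa using (Finset.card_le_card hsub).trans Finset.card_image_le
  omega

lemma StrictMono.eq_of_forall_lt_of_le {k n : ℕ} {i j : Fin k → ℕ} (hi : StrictMono i)
    (hj : StrictMono j) (hin : ∀ l, i l < n) (hjn : ∀ l, j l < n) (hk : n ≤ k) : i = j := by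
  have hcard : (Finset.range n).card = k :=
    (Finset.card_range n).trans <| hk.antisymm <| by
      simpa using Finset.card_le_card_of_injOn (s := Finset.univ) i
        (fun l _ => Finset.mem_range.2 (hin l)) hi.injective.injOn
  rw [Finset.orderEmbOfFin_unique hcard (fun l => Finset.mem_range.2 (hin l)) hi,
    Finset.orderEmbOfFin_unique hcard (fun l => Finset.mem_range.2 (hjn l)) hj]

lemma exists_succAbove_comp_eq {k n p : ℕ} {i : Fin k → ℕ} (hi : StrictMono i)
    (hin : ∀ l, i l < n + 1) (hp : p ≤ n) (hgap : p ∉ Set.range i) :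
    ∃ i' : Fin k → ℕ, StrictMono i' ∧ (∀ l, i' l < n) ∧ succAbove p ∘ i' = i := by
  choose i' hi' using fun l => Nat.exists_succAbove_eq fun h => hgap ⟨l, h⟩
  refine ⟨i', fun a b hab => ?_, fun l => ?_, funext hi'⟩
  · rw [← (Nat.strictMono_succAbove p).lt_iff_lt, hi', hi']
    exact hi hab
  · have := hi' l
    have := hin l
    unfold succAbove at *
    split_ifs at * <;> omega

lemma isQSym_zero (f : MvPolynomial ℕ ℤ) : IsQSym 0 f :=
  fun k _ _ _ _ hi hj hin hjn => by rw [hi.eq_of_forall_lt_of_le hj hin hjn k.zero_le]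

lemma isQSym_succ {n : ℕ} {f : MvPolynomial ℕ ℤ} (hg : IsQSym n (R (n + 1) f))
    (hR : ∀ p ≤ n, R (p + 1) f = R (n + 1) f) : IsQSym (n + 1) f := by
  intro k a ha i j hi hj hin hjn
  obtain hk | hk := lt_or_ge k (n + 1)
  · have reduce : ∀ i : Fin k → ℕ, StrictMono i → (∀ l, i l < n + 1) →
        ∃ i' : Fin k → ℕ, StrictMono i' ∧ (∀ l, i' l < n) ∧
          coeff (∑ l, Finsupp.single (i l) (a l)) f =
            coeff (∑ l, Finsupp.single (i' l) (a l)) (R (n + 1) f) := by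
      intro i hi hin
      obtain ⟨p, hp, hgap⟩ := exists_lt_notMem_range i hk
      obtain ⟨i', hi', hi'n, rfl⟩ := exists_succAbove_comp_eq hi hin (Nat.le_of_lt_succ hp) hgap
      refine ⟨i', hi', hi'n, ?_⟩
      rw [← hR p (Nat.le_of_lt_succ hp), coeff_R_succ, Finsupp.mapDomain_finsetSum]
      simp only [Finsupp.mapDomain_single, Function.comp_apply]
    obtain ⟨i', hi', hi'n, hci⟩ := reduce i hi hin
    obtain ⟨j', hj', hj'n, hcj⟩ := reduce j hj hjn
    rw [hci, hcj]
    exact hg k a ha i' j' hi' hj' hi'n hj'n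
  · rw [hi.eq_of_forall_lt_of_le hj hin hjn hk]

lemma isQSym_of_R_eq {n : ℕ} {f : MvPolynomial ℕ ℤ}
    (H : ∀ i j, 1 ≤ i → i ≤ n → 1 ≤ j → j ≤ n → R i f = R j f) : IsQSym n f := by
  induction n generalizing f with
  | zero => exact isQSym_zero f
  | succ n ih =>
    have comm : ∀ i, 1 ≤ i → i ≤ n → R i (R (n + 1) f) = R n (R i f) :=
      fun i hi hin => AlgHom.congr_fun (R_comp_R hi hin) f
    refine isQSym_succ (ih fun i j hi hin hj hjn => ?_)
      fun p hp => H _ _ (by omega) (by omega) (by omega) le_rfl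
    rw [comm i hi hin, comm j hj hjn, H i j hi (by omega) hj (by omega)]

/-- A polynomial in `n` variables is quasisymmetric if and only
if `R_1 f = R_2 f = ⋯ = R_n f`. -/
theorem qsym_iff_R_eq (n : ℕ) (f : MvPolynomial ℕ ℤ) (hf : InVars n f) :
    IsQSym n f ↔ ∀ i j, 1 ≤ i → i ≤ n → 1 ≤ j → j ≤ n → R i f = R j f := by
  refine ⟨fun hq i j hi hin hj hjn => ?_, isQSym_of_R_eq⟩
  obtain ⟨p, rfl⟩ := Nat.exists_eq_add_of_le' hi
  obtain ⟨q, rfl⟩ := Nat.exists_eq_add_of_le' hj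
  exact R_eq_R_of_isQSym hf hq (by omega) (by omega)
end

section
/- The Hivert quasisymmetrizing characterization: f ∈ ℤ[x_1,...,x_n] is quasisymmetric if and only if f = σ_1·f = ... = σ_{n-1}·f, where σ_i acts on a monomial x^c by swapping exponents c_i and c_{i+1} if either c_i = 0 or c_{i+1} = 0, and fixes the monomial otherwise. -/
open MvPolynomial

/-- Hivert's quasisymmetrizing operator `σ_i` (1-based `i`): on a monomial
`x^c` it swaps the exponents `c_i` and `c_{i+1}` (positions `i-1`, `i` in the
0-based indexing) if one of them is zero, and fixes the monomial otherwise. -/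
noncomputable def sigma (i : ℕ) (f : MvPolynomial ℕ ℤ) : MvPolynomial ℕ ℤ :=
  ∑ d ∈ f.support,
    if d (i - 1) = 0 ∨ d i = 0 then
      monomial (Finsupp.equivMapDomain (Equiv.swap (i - 1) i) d) (coeff d f)
    else monomial d (coeff d f)

/-!
On coefficients, `σ_i` acts through the involution `quasiSwap` of exponent vectors:
`coeff e (σ_i f) = coeff (quasiSwap (i-1) i e) f`. When one of the two swapped exponents vanishes,
the swap is order-preserving on the support of `e`, so it only relocates the composition of `e`
and quasisymmetry makes the coefficient invariant. Conversely, `σ`-invariance lets one slide a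
variable one step left into an empty slot; repeating this (the sum of the positions drops each
time) packs every `x_{i_1}^{a_1} ⋯ x_{i_k}^{a_k}` to `x_1^{a_1} ⋯ x_k^{a_k}`.
-/

noncomputable def quasiSwap (a b : ℕ) (d : ℕ →₀ ℕ) : ℕ →₀ ℕ :=
  if d a = 0 ∨ d b = 0 then Finsupp.equivMapDomain (Equiv.swap a b) d else d

lemma quasiSwap_involutive (a b : ℕ) : Function.Involutive (quasiSwap a b) := by
  intro d
  by_cases h : d a = 0 ∨ d b = 0
  · have h' :
        d.equivMapDomain (Equiv.swap a b) a = 0 ∨ d.equivMapDomain (Equiv.swap a b) b = 0 := by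
      simpa [Finsupp.equivMapDomain_apply, or_comm] using h
    simp only [quasiSwap, if_pos h, if_pos h', ← Finsupp.equivMapDomain_trans, Equiv.swap_swap,
      Finsupp.equivMapDomain_refl]
  · simp only [quasiSwap, if_neg h]

lemma sigma_eq_sum (i : ℕ) (f : MvPolynomial ℕ ℤ) :
    sigma i f = ∑ d ∈ f.support, monomial (quasiSwap (i - 1) i d) (coeff d f) := by
  refine Finset.sum_congr rfl fun d _ => ?_
  rw [quasiSwap]
  split_ifs <;> rfl

lemma coeff_sigma (i : ℕ) (f : MvPolynomial ℕ ℤ) (e : ℕ →₀ ℕ) :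
    coeff e (sigma i f) = coeff (quasiSwap (i - 1) i e) f := by
  have hτ : ∀ d, quasiSwap (i - 1) i d = e ↔ d = quasiSwap (i - 1) i e :=
    fun d => (quasiSwap_involutive _ _).eq_iff
  simp only [sigma_eq_sum, coeff_sum, coeff_monomial, hτ, Finset.sum_ite_eq', mem_support_iff,
    ite_not, ite_eq_right_iff]
  exact fun h => h.symm

lemma strictMonoOn_swap_succ {a : ℕ} {s : Set ℕ} (hs : a ∉ s ∨ a + 1 ∉ s) :
    StrictMonoOn (Equiv.swap a (a + 1)) s := by
  rcases hs with hs | hs <;>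
  · intro x hx y hy hxy
    have := ne_of_mem_of_not_mem hx hs
    have := ne_of_mem_of_not_mem hy hs
    simp only [Equiv.swap_apply_def]
    split_ifs <;> omega

lemma swap_succ_apply_lt {a n x : ℕ} (ha : a + 1 < n) (hx : x < n) :
    Equiv.swap a (a + 1) x < n := by
  rw [Equiv.swap_apply_def]
  split_ifs <;> omega

lemma Finsupp.eq_sum_single_orderIsoOfFin {α M : Type*} [LinearOrder α] [AddCommMonoid M]
    (e : α →₀ M) :
    e = ∑ l, single (e.support.orderIsoOfFin rfl l : α) (e (e.support.orderIsoOfFin rfl l)) := by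
  conv_lhs => rw [← Finsupp.sum_single e]
  rw [Finsupp.sum, ← Finset.sum_coe_sort,
    ← (e.support.orderIsoOfFin rfl).toEquiv.sum_comp]
  rfl

lemma Finsupp.mapDomain_sum_single {α β ι M : Type*} [Fintype ι] [AddCommMonoid M] (φ : α → β)
    (i : ι → α) (a : ι → M) :
    mapDomain φ (∑ l, single (i l) (a l)) = ∑ l, single (φ (i l)) (a l) := by
  simp only [mapDomain_finsetSum, mapDomain_single]

lemma InVars.coeff_eq_zero_s6 {n : ℕ} {f : MvPolynomial ℕ ℤ} (hf : InVars n f) {e : ℕ →₀ ℕ}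
    {t : ℕ} (ht : n ≤ t) (het : e t ≠ 0) : coeff e f = 0 :=
  notMem_support_iff.mp fun he => het (hf e he t ht)

lemma IsQSym.coeff_mapDomain {n : ℕ} {f : MvPolynomial ℕ ℤ} (hq : IsQSym n f) {e : ℕ →₀ ℕ}
    {φ : ℕ → ℕ} (hφ : StrictMonoOn φ e.support) (he : ∀ t ∈ e.support, t < n)
    (hφn : ∀ t ∈ e.support, φ t < n) :
    coeff (Finsupp.mapDomain φ e) f = coeff e f := by
  set ι := e.support.orderIsoOfFin rfl
  have hι : StrictMono fun l => (ι l : ℕ) := fun _ _ h => ι.strictMono h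
  have hφι : StrictMono fun l => φ (ι l) :=
    fun _ _ h => hφ (ι _).2 (ι _).2 (hι h)
  rw [e.eq_sum_single_orderIsoOfFin, Finsupp.mapDomain_sum_single]
  refine (hq _ _ (fun l => Nat.one_le_iff_ne_zero.mpr (Finsupp.mem_support_iff.mp (ι l).2))
    _ _ hι hφι (fun l => he _ (ι l).2) (fun l => hφn _ (ι l).2)).symm

lemma IsQSym.coeff_quasiSwap_succ {n : ℕ} {f : MvPolynomial ℕ ℤ} (hf : InVars n f)
    (hq : IsQSym n f) {a : ℕ} (ha : a + 1 < n) (e : ℕ →₀ ℕ) :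
    coeff (quasiSwap a (a + 1) e) f = coeff e f := by
  unfold quasiSwap
  split_ifs with h0
  · by_cases hout : ∀ t ∈ e.support, t < n
    · have hs : a ∉ e.support ∨ a + 1 ∉ e.support := by simpa only [Finsupp.notMem_support_iff]
      rw [Finsupp.equivMapDomain_eq_mapDomain]
      exact hq.coeff_mapDomain (strictMonoOn_swap_succ hs) hout
        fun t ht => swap_succ_apply_lt ha (hout t ht)
    · push Not at hout
      obtain ⟨t, ht, hnt⟩ := hout
      have hfix : Equiv.swap a (a + 1) t = t := Equiv.swap_apply_of_ne_of_ne (by omega) (by omega)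
      rw [hf.coeff_eq_zero_s6 hnt (Finsupp.mem_support_iff.mp ht), hf.coeff_eq_zero_s6 hnt]
      rwa [Finsupp.equivMapDomain_apply, Equiv.symm_swap, hfix, ← Finsupp.mem_support_iff]
  · rfl

lemma StrictMono.eq_val_of_forall_succ_mem_range {k : ℕ} {i : Fin k → ℕ} (hi : StrictMono i)
    (hrange : ∀ t, t + 1 ∈ Set.range i → t ∈ Set.range i) (l : Fin k) : i l = l := by
  induction l using WellFoundedLT.induction with
  | _ l ih =>
    have hle : (l : ℕ) ≤ i l := by
      by_cases h0 : (l : ℕ) = 0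
      · omega
      · have hpred : (⟨l - 1, by omega⟩ : Fin k) < l := Fin.lt_def.mpr (by dsimp only; omega)
        have := hi hpred
        rw [ih _ hpred] at this
        exact Nat.le_of_pred_lt this
    by_contra hne
    obtain ⟨l', hl'⟩ := hrange (i l - 1) ⟨l, by omega⟩
    have hlt : l' < l := hi.lt_iff_lt.mp (by omega)
    have hl'val := ih l' hlt
    have hlt' : (l' : ℕ) < l := hlt
    omega

lemma coeff_sum_single_eq_of_swap_succ_invariant {n : ℕ} {f : MvPolynomial ℕ ℤ}
    (H : ∀ t, t + 1 < n → ∀ e : ℕ →₀ ℕ, e t = 0 →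
      coeff (Finsupp.equivMapDomain (Equiv.swap t (t + 1)) e) f = coeff e f)
    {k : ℕ} (a i : Fin k → ℕ) (hi : StrictMono i) (hin : ∀ l, i l < n) :
    coeff (∑ l, Finsupp.single (i l) (a l)) f =
      coeff (∑ l : Fin k, Finsupp.single (l : ℕ) (a l)) f := by
  induction hN : ∑ l, i l using Nat.strong_induction_on generalizing i with
  | _ N ih =>
    by_cases hgap : ∃ t, t + 1 ∈ Set.range i ∧ t ∉ Set.range i
    · obtain ⟨t, ⟨l₀, hl₀⟩, ht⟩ := hgap
      have htn : t + 1 < n := hl₀ ▸ hin l₀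
      have hit : ∀ l, i l ≠ t := fun l h => ht ⟨l, h⟩
      set i' := fun l => Equiv.swap t (t + 1) (i l)
      have hi' : StrictMono i' := fun _ _ h =>
        strictMonoOn_swap_succ (.inl ht) (Set.mem_range_self _) (Set.mem_range_self _) (hi h)
      have hle : ∀ l, i' l ≤ i l := fun l => by
        have := hit l
        simp only [i', Equiv.swap_apply_def]
        split_ifs <;> omega
      have hlt : i' l₀ < i l₀ := by simp [i', hl₀]
      have hsum : ∑ l, i' l < N :=
        hN ▸ Finset.sum_lt_sum (fun l _ => hle l) ⟨l₀, Finset.mem_univ _, hlt⟩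
      have hzero : (∑ l, Finsupp.single (i l) (a l)) t = 0 := by
        simp [Finsupp.finsetSum_apply, hit]
      calc coeff (∑ l, Finsupp.single (i l) (a l)) f
          = coeff (Finsupp.equivMapDomain (Equiv.swap t (t + 1))
              (∑ l, Finsupp.single (i l) (a l))) f := (H t htn _ hzero).symm
        _ = coeff (∑ l, Finsupp.single (i' l) (a l)) f := by
          rw [Finsupp.equivMapDomain_eq_mapDomain, Finsupp.mapDomain_sum_single]
        _ = _ := ih _ hsum i' hi' (fun l => swap_succ_apply_lt htn (hin l)) rfl
    · push Not at hgap
      simp only [hi.eq_val_of_forall_succ_mem_range hgap]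

/-- Hivert's characterization: `f ∈ ℤ[x_1,…,x_n]` is
quasisymmetric iff `f = σ_1 f = ⋯ = σ_{n-1} f`. -/
theorem qsym_iff_sigma_fixed (n : ℕ) (f : MvPolynomial ℕ ℤ) (hf : InVars n f) :
    IsQSym n f ↔ ∀ i, 1 ≤ i → i + 1 ≤ n → sigma i f = f := by
  constructor
  · intro hq i hi hin
    obtain ⟨a, rfl⟩ : ∃ a, i = a + 1 := ⟨i - 1, by omega⟩
    ext e
    rw [coeff_sigma, Nat.add_sub_cancel, hq.coeff_quasiSwap_succ hf (by omega)]
  · intro hσ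
    have H : ∀ t, t + 1 < n → ∀ e : ℕ →₀ ℕ, e t = 0 →
        coeff (Finsupp.equivMapDomain (Equiv.swap t (t + 1)) e) f = coeff e f := by
      intro t ht e het
      have := coeff_sigma (t + 1) f e
      rwa [hσ (t + 1) (by omega) (by omega), Nat.add_sub_cancel, quasiSwap, if_pos (.inl het),
        eq_comm] at this
    intro k a _ i j hi hj hin hjn
    rw [coeff_sum_single_eq_of_swap_succ_invariant H a i hi hin,
      coeff_sum_single_eq_of_swap_succ_invariant H a j hj hjn]
end

section
/- In the Thompson monoid Th (the monoid with generators 1, 2, 3, ... and relations i·j = j·(i+1) for i > j), every element has a unique normal form 1^{c_1}·2^{c_2}·3^{c_3}··· with finitely many nonzero exponents c_i ≥ 0. -/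
/-- The defining relations of the (positive) Thompson monoid on the generators
`0, 1, 2, …`: `i · j = j · (i+1)` whenever `i > j`. -/
def thRel : FreeMonoid ℕ → FreeMonoid ℕ → Prop := fun a b =>
  ∃ i j : ℕ, j < i ∧ a = FreeMonoid.of i * FreeMonoid.of j ∧
    b = FreeMonoid.of j * FreeMonoid.of (i + 1)

/-- The congruence generated by the Thompson relations. -/
def thCon : Con (FreeMonoid ℕ) := conGen thRel

/-- The Thompson monoid. -/
def Th : Type := thCon.Quotient

noncomputable instance : Monoid Th := Con.monoid thCon

/-- The word `1^{c_1} · 2^{c_2} · ⋯` (generators listed in increasing order,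
the `i`-th generator repeated `c_i` times). -/
def wordOf (c : ℕ →₀ ℕ) : FreeMonoid ℕ :=
  FreeMonoid.ofList
    (((List.range (c.support.sup id + 1)).map fun i => List.replicate (c i) i).flatten)

/-!
Sorted words are the normal forms. A letter `i` in front of a sorted word can be moved
right past each smaller letter `a` by `i · a = a · (i + 1)`, so every word is congruent to a
sorted one. These insertion maps satisfy the Thompson relations themselves, hence the monoid
acts on lists of letters, and letting an element act on the empty list recovers its sorted word,
which is therefore unique.
-/

namespace Thompson

open FreeMonoid

def ins (i : ℕ) : List ℕ → List ℕ
  | [] => [i]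
  | a :: t => if i ≤ a then i :: a :: t else a :: ins (i + 1) t

theorem ins_ins_of_lt {i j : ℕ} (h : j < i) (l : List ℕ) :
    ins i (ins j l) = ins j (ins (i + 1) l) := by
  induction l generalizing i j with
  | nil => simp [ins, Nat.not_le.2 h, h.le.trans i.le_succ]
  | cons a t ih =>
    by_cases hja : j ≤ a
    · by_cases hia : i + 1 ≤ a
      · simp [ins, hja, hia, Nat.not_le.2 h, h.le.trans i.le_succ]
      · simp [ins, hja, hia, Nat.not_le.2 h]
    · have hia : ¬ i ≤ a := by omega
      have hia' : ¬ i + 1 ≤ a := by omega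
      simp [ins, hja, hia, hia', ih (Nat.succ_lt_succ h)]

theorem le_or_mem_of_mem_ins {i x : ℕ} {l : List ℕ} (hx : x ∈ ins i l) : i ≤ x ∨ x ∈ l := by
  induction l generalizing i with
  | nil => simp_all [ins]
  | cons a t ih =>
    unfold ins at hx
    split_ifs at hx with hia
    · rcases List.mem_cons.1 hx with rfl | hx
      · exact .inl le_rfl
      · exact .inr hx
    · rcases List.mem_cons.1 hx with rfl | hx
      · exact .inr List.mem_cons_self
      · exact (ih hx).imp (fun h => by omega) (List.mem_cons_of_mem a)

theorem pairwise_ins (i : ℕ) {l : List ℕ} (hl : l.Pairwise (· ≤ ·)) :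
    (ins i l).Pairwise (· ≤ ·) := by
  induction l generalizing i with
  | nil => simp [ins]
  | cons a t ih =>
    rw [List.pairwise_cons] at hl
    unfold ins
    split_ifs with hia
    · exact List.pairwise_cons.2
        ⟨List.forall_mem_cons.2 ⟨hia, fun x hx => hia.trans (hl.1 x hx)⟩, List.pairwise_cons.2 hl⟩
    · refine List.pairwise_cons.2 ⟨fun x hx => ?_, ih (i + 1) hl.2⟩
      rcases le_or_mem_of_mem_ins hx with h | h
      · omega
      · exact hl.1 x h

theorem ins_eq_cons {i : ℕ} {l : List ℕ} (h : ∀ x ∈ l, i ≤ x) : ins i l = i :: l := by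
  cases l with
  | nil => rfl
  | cons a t => simp [ins, h a (by simp)]

theorem thCon_of_mul_ofList_ins (i : ℕ) (l : List ℕ) :
    thCon (of i * ofList l) (ofList (ins i l)) := by
  induction l generalizing i with
  | nil => exact thCon.refl _
  | cons a t ih =>
    unfold ins
    split_ifs with hia
    · exact thCon.refl _
    · have hrel : thCon (of i * of a) (of a * of (i + 1)) :=
        ConGen.Rel.of _ _ ⟨i, a, by omega, rfl, rfl⟩
      rw [ofList_cons, ofList_cons, ← mul_assoc]
      refine thCon.trans (thCon.mul hrel (thCon.refl _)) ?_
      rw [mul_assoc]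
      exact thCon.mul (thCon.refl _) (ih (i + 1))

def insHom : FreeMonoid ℕ →* Function.End (List ℕ) :=
  FreeMonoid.lift fun i => (ins i : Function.End (List ℕ))

theorem insHom_of_mul (i : ℕ) (w : FreeMonoid ℕ) (l : List ℕ) :
    insHom (of i * w) l = ins i (insHom w l) := by
  rw [map_mul]
  rfl

theorem thCon_le_ker_insHom : thCon ≤ Con.ker insHom := by
  refine Con.conGen_le.2 ?_
  rintro _ _ ⟨i, j, h, rfl, rfl⟩
  refine funext fun l => ?_
  rw [← mul_one (of j), ← mul_one (of (i + 1))]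
  simp only [insHom_of_mul]
  exact ins_ins_of_lt h _

def normalize (w : FreeMonoid ℕ) : List ℕ := insHom w []

theorem normalize_eq_of_thCon {w w' : FreeMonoid ℕ} (h : thCon w w') :
    normalize w = normalize w' :=
  congrFun (thCon_le_ker_insHom h) []

theorem pairwise_normalize (w : FreeMonoid ℕ) : (normalize w).Pairwise (· ≤ ·) := by
  induction w using FreeMonoid.inductionOn' with
  | one => exact List.Pairwise.nil
  | of_mul i w ih => rw [normalize, insHom_of_mul]; exact pairwise_ins i ih

theorem thCon_ofList_normalize (w : FreeMonoid ℕ) : thCon w (ofList (normalize w)) := by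
  induction w using FreeMonoid.inductionOn' with
  | one => exact thCon.refl _
  | of_mul i w ih =>
    rw [normalize, insHom_of_mul]
    exact thCon.trans (thCon.mul (thCon.refl _) ih) (thCon_of_mul_ofList_ins i _)

theorem normalize_ofList {l : List ℕ} (hl : l.Pairwise (· ≤ ·)) : normalize (ofList l) = l := by
  induction l with
  | nil => rfl
  | cons a t ih =>
    rw [List.pairwise_cons] at hl
    rw [normalize, ofList_cons, insHom_of_mul, ← normalize, ih hl.2, ins_eq_cons hl.1]

theorem pairwise_toList_wordOf (c : ℕ →₀ ℕ) : (wordOf c).toList.Pairwise (· ≤ ·) := by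
  refine List.pairwise_flatten.2 ⟨?_, ?_⟩
  · simp only [List.mem_map]
    rintro _ ⟨i, -, rfl⟩
    exact List.pairwise_replicate.2 (.inr le_rfl)
  · refine List.pairwise_lt_range.map _ fun i j hij x hx y hy => ?_
    rw [List.eq_of_mem_replicate hx, List.eq_of_mem_replicate hy]
    exact hij.le

theorem count_toList_wordOf (c : ℕ →₀ ℕ) (i : ℕ) : (wordOf c).toList.count i = c i := by
  rw [wordOf, toList_ofList, List.count_flatten, List.map_map,
    List.sum_map_eq_nsmul_single i _ fun j hj _ => by simp [List.count_replicate, hj]]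
  simp only [Function.comp_apply, List.count_replicate_self, List.count_range, smul_eq_mul]
  split_ifs with hi
  · exact one_mul _
  · rw [zero_mul, eq_comm, ← Finsupp.notMem_support_iff]
    exact fun hc => hi (Nat.lt_succ_of_le (Finset.le_sup (f := id) hc))

theorem wordOf_toFinsupp {l : List ℕ} (hl : l.Pairwise (· ≤ ·)) :
    wordOf (Multiset.toFinsupp l) = ofList l := by
  refine congrArg ofList (List.Perm.eq_of_pairwise' (pairwise_toList_wordOf _) hl ?_)
  exact List.perm_iff_count.2 fun i => (count_toList_wordOf _ i).trans (Multiset.coe_count i l)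

theorem toFinsupp_toList_wordOf (c : ℕ →₀ ℕ) : Multiset.toFinsupp ↑(wordOf c).toList = c :=
  Finsupp.ext fun i => by
    rw [Multiset.toFinsupp_apply, Multiset.coe_count, count_toList_wordOf]

end Thompson

open Thompson in
/-- In the Thompson monoid, every element has a unique normal
form `1^{c_1} · 2^{c_2} · 3^{c_3} ⋯` with finitely many nonzero exponents. -/
theorem thompson_normal_form (x : Th) :
    ∃! c : ℕ →₀ ℕ, x = thCon.mk' (wordOf c) := by
  obtain ⟨w, rfl⟩ := Con.mk'_surjective (c := thCon) x
  refine ⟨Multiset.toFinsupp (normalize w), ?_, fun c hc => ?_⟩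
  · refine (Con.eq thCon).2 ?_
    rw [wordOf_toFinsupp (pairwise_normalize w)]
    exact thCon_ofList_normalize w
  · have hw : normalize w = (wordOf c).toList := by
      rw [normalize_eq_of_thCon ((Con.eq thCon).1 hc)]
      exact normalize_ofList (pairwise_toList_wordOf c)
    rw [hw, toFinsupp_toList_wordOf]
end

section
/- The monoid of indexed forests (equivalently, the Thompson monoid) is right-cancellable: for a fixed forest G, the map H ↦ H·G is injective. -/
/-! Nondecreasing words are normal forms. The monoid acts on the right on multisets of indices,
the generator `x` acting by `insertGen x`: keep the indices `≤ x`, add `x`, and shift the larger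
indices up by one. The defining relations hold for this action and every `insertGen x` is
injective. The multiset `normalForm H` reached from `0` determines `H`, because `H` is the
nondecreasing word with these letters: a new last letter `x` moves left past the letters `> x`,
raising each by one. So `H * G = H' * G` forces `normalForm H = normalForm H'`, hence `H = H'`. -/

namespace Th

def insertGen (x : ℕ) (m : Multiset ℕ) : Multiset ℕ :=
  m.filter (· ≤ x) + x ::ₘ (m.filter (x < ·)).map (· + 1)

@[simp]
theorem insertGen_zero (x : ℕ) : insertGen x 0 = {x} := rfl

@[simp]
theorem insertGen_cons (x a : ℕ) (m : Multiset ℕ) :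
    insertGen x (a ::ₘ m) = if a ≤ x then a ::ₘ insertGen x m else (a + 1) ::ₘ insertGen x m := by
  unfold insertGen
  split_ifs with h
  · rw [Multiset.filter_cons_of_pos (p := (· ≤ x)) _ h,
      Multiset.filter_cons_of_neg (p := (x < ·)) _ (not_lt.2 h), Multiset.cons_add]
  · rw [Multiset.filter_cons_of_neg (p := (· ≤ x)) _ h,
      Multiset.filter_cons_of_pos (p := (x < ·)) _ (not_le.1 h),
      Multiset.map_cons, Multiset.add_cons, Multiset.add_cons, Multiset.cons_swap,
      Multiset.add_cons]

theorem insertGen_insertGen_of_lt {i j : ℕ} (h : j < i) (m : Multiset ℕ) :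
    insertGen (i + 1) (insertGen j m) = insertGen j (insertGen i m) := by
  induction m using Multiset.induction_on with
  | empty =>
    simp [← Multiset.cons_zero, h.not_ge, show ¬i + 1 < j by omega, Multiset.cons_swap]
  | cons a m ih =>
    simp only [insertGen_cons]
    split_ifs <;> simp only [insertGen_cons] <;> split_ifs <;> first | omega | simp [ih]

theorem filter_le_insertGen (x : ℕ) (m : Multiset ℕ) :
    (insertGen x m).filter (· ≤ x) = x ::ₘ m.filter (· ≤ x) := by
  induction m using Multiset.induction_on with
  | empty => simp
  | cons a m ih =>
    rw [insertGen_cons]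
    split_ifs with h
    · rw [Multiset.filter_cons_of_pos (p := (· ≤ x)) _ h,
        Multiset.filter_cons_of_pos (p := (· ≤ x)) _ h, ih, Multiset.cons_swap]
    · rw [Multiset.filter_cons_of_neg (p := (· ≤ x)) _ (by omega),
        Multiset.filter_cons_of_neg (p := (· ≤ x)) _ h, ih]

theorem filter_lt_insertGen (x : ℕ) (m : Multiset ℕ) :
    (insertGen x m).filter (x < ·) = (m.filter (x < ·)).map (· + 1) := by
  induction m using Multiset.induction_on with
  | empty => simp
  | cons a m ih =>
    rw [insertGen_cons]
    split_ifs with h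
    · rw [Multiset.filter_cons_of_neg _ (not_lt.2 h), Multiset.filter_cons_of_neg _ (not_lt.2 h),
        ih]
    · rw [Multiset.filter_cons_of_pos _ (by omega), Multiset.filter_cons_of_pos _ (by omega), ih,
        Multiset.map_cons]

theorem insertGen_injective (x : ℕ) : Function.Injective (insertGen x) := by
  intro m n hmn
  have hle : m.filter (· ≤ x) = n.filter (· ≤ x) := by
    simpa [filter_le_insertGen] using congrArg (Multiset.filter (· ≤ x)) hmn
  have hlt : m.filter (x < ·) = n.filter (x < ·) :=
    Multiset.map_injective (add_left_injective 1) <| by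
      simpa only [filter_lt_insertGen] using congrArg (Multiset.filter (x < ·)) hmn
  rw [← Multiset.filter_add_not (· ≤ x) m, ← Multiset.filter_add_not (· ≤ x) n, hle]
  simp_rw [not_le]
  rw [hlt]

def word (l : List ℕ) : Th := thCon.mk' (FreeMonoid.ofList l)

def gen (i : ℕ) : Th := word [i]

theorem word_nil : word [] = 1 :=
  map_one thCon.mk'

theorem word_append (l l' : List ℕ) : word (l ++ l') = word l * word l' :=
  map_mul thCon.mk' _ _

theorem word_cons (a : ℕ) (l : List ℕ) : word (a :: l) = gen a * word l :=
  word_append [a] l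

theorem word_surjective : Function.Surjective word :=
  fun H => Con.induction_on H fun w => ⟨w.toList, rfl⟩

theorem gen_mul_gen_of_lt {i j : ℕ} (h : j < i) : gen i * gen j = gen j * gen (i + 1) := by
  simp only [gen, ← word_append]
  exact thCon.eq.2 (ConGen.Rel.of _ _ ⟨i, j, h, rfl, rfl⟩)

theorem word_mul_gen_of_forall_lt {B : List ℕ} {x : ℕ} (hB : ∀ b ∈ B, x < b) :
    word B * gen x = gen x * word (B.map (· + 1)) := by
  induction B with
  | nil => rw [List.map_nil, word_nil, one_mul, mul_one]
  | cons b B ih =>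
    rw [word_cons, mul_assoc, ih fun c hc => hB c (List.mem_cons_of_mem b hc), ← mul_assoc,
      gen_mul_gen_of_lt (hB b List.mem_cons_self), mul_assoc, List.map_cons, word_cons]

def insertGenList (x : ℕ) (l : List ℕ) : List ℕ :=
  l.filter (· ≤ x) ++ x :: (l.filter (x < ·)).map (· + 1)

theorem coe_insertGenList (x : ℕ) (l : List ℕ) :
    (insertGenList x l : Multiset ℕ) = insertGen x l := by
  simp [insertGenList, insertGen]

theorem pairwise_insertGenList {l : List ℕ} (hl : l.Pairwise (· ≤ ·)) (x : ℕ) :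
    (insertGenList x l).Pairwise (· ≤ ·) := by
  simp only [insertGenList, List.pairwise_append, List.pairwise_cons, List.pairwise_map,
    List.mem_cons, List.mem_map, List.mem_filter, decide_eq_true_eq]
  refine ⟨hl.filter _, ⟨?_, (hl.filter _).imp (by omega)⟩, ?_⟩
  · rintro _ ⟨b, ⟨-, hb⟩, rfl⟩
    omega
  · rintro a ⟨-, hax⟩ b (rfl | ⟨c, ⟨-, hc⟩, rfl⟩) <;> omega

theorem word_mul_gen {l : List ℕ} (hl : l.Pairwise (· ≤ ·)) (x : ℕ) :
    word l * gen x = word (insertGenList x l) := by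
  induction l with
  | nil => simp [insertGenList, word_cons, word_nil]
  | cons a l ih =>
    by_cases hax : a ≤ x
    · have : insertGenList x (a :: l) = a :: insertGenList x l := by
        simp [insertGenList, hax, not_lt.2 hax]
      rw [this, word_cons, word_cons, mul_assoc, ih hl.of_cons]
    · have hlt : ∀ b ∈ a :: l, x < b := by
        rintro b (_ | ⟨_, hb⟩)
        · omega
        · have := List.rel_of_pairwise_cons hl hb
          omega
      have : insertGenList x (a :: l) = x :: (a :: l).map (· + 1) := by
        rw [insertGenList, List.filter_eq_nil_iff.2 fun b hb => by simpa using hlt b hb,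
          List.filter_eq_self.2 fun b hb => by simpa using hlt b hb, List.nil_append]
      rw [this, word_mul_gen_of_forall_lt hlt, word_cons]

-- `Function.End` multiplies by composition, so a right action is a hom to its opposite.
def freeAct : FreeMonoid ℕ →* (Function.End (Multiset ℕ))ᵐᵒᵖ :=
  FreeMonoid.lift fun x => .op (insertGen x)

theorem thCon_le_ker_freeAct : thCon ≤ Con.ker freeAct := by
  refine Con.conGen_le.2 ?_
  rintro _ _ ⟨i, j, h, rfl, rfl⟩
  rw [Con.ker_rel, map_mul, map_mul]
  exact congrArg MulOpposite.op (funext (insertGen_insertGen_of_lt h)).symm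

def act : Th →* (Function.End (Multiset ℕ))ᵐᵒᵖ :=
  thCon.lift freeAct thCon_le_ker_freeAct

theorem act_gen (x : ℕ) : act (gen x) = .op (insertGen x) := rfl

theorem unop_act_injective (G : Th) : Function.Injective (act G).unop := by
  obtain ⟨l, rfl⟩ := word_surjective G
  induction l with
  | nil => exact Function.injective_id
  | cons a l ih =>
    rw [word_cons, map_mul, MulOpposite.unop_mul, act_gen]
    exact ih.comp (insertGen_injective a)

noncomputable def normalForm (H : Th) : Multiset ℕ := (act H).unop 0

theorem normalForm_mul (H G : Th) : normalForm (H * G) = (act G).unop (normalForm H) := by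
  rw [normalForm, map_mul, MulOpposite.unop_mul]
  rfl

theorem exists_sorted_word (H : Th) :
    ∃ l : List ℕ, l.Pairwise (· ≤ ·) ∧ (l : Multiset ℕ) = normalForm H ∧ word l = H := by
  obtain ⟨w, rfl⟩ := word_surjective H
  induction w using List.reverseRecOn with
  | nil => exact ⟨[], List.Pairwise.nil, rfl, rfl⟩
  | append_singleton w x ih =>
    obtain ⟨l, hl, hnf, hw⟩ := ih
    refine ⟨insertGenList x l, pairwise_insertGenList hl x, ?_, ?_⟩
    · rw [coe_insertGenList, word_append, ← gen, normalForm_mul, act_gen, hnf]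
      rfl
    · rw [← word_mul_gen hl, hw, word_append, gen]

theorem word_sort_normalForm (H : Th) : word ((normalForm H).sort (· ≤ ·)) = H := by
  obtain ⟨l, hl, hnf, rfl⟩ := exists_sorted_word H
  rw [← hnf]
  congr 1
  exact List.Perm.eq_of_pairwise' (Multiset.pairwise_sort _ _) hl
    (Multiset.coe_eq_coe.1 (Multiset.sort_eq _ _))

theorem normalForm_injective : Function.Injective normalForm := fun H H' h => by
  rw [← word_sort_normalForm H, h, word_sort_normalForm]

end Th

/-- The Thompson monoid is right-cancellable: for each fixed
`G`, the map `H ↦ H * G` is injective. -/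
theorem thompson_right_cancellable (G : Th) :
    Function.Injective (fun H : Th => H * G) := by
  intro H H' h
  apply Th.normalForm_injective
  apply Th.unop_act_injective G
  simpa only [Th.normalForm_mul] using congrArg Th.normalForm h
end

section
/- For a = (a_1,...,a_k) ∈ QSeq_n, the trimming operator applied to the fundamental quasisymmetric polynomial satisfies T_j(L_a) = L_{a'} if j = a_1 = n (where a' = (a_2,...,a_k)), and T_j(L_a) = 0 for all other j. -/
open MvPolynomial
open scoped Classical

/-- The trimming operator `T i = (R (i+1) f - R i f) / x_i`. -/
noncomputable def T (i : ℕ) (f : MvPolynomial ℕ ℤ) : MvPolynomial ℕ ℤ :=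
  (R (i + 1) f - R i f).divMonomial (Finsupp.single (i - 1) 1)

/-- Compatible sequences for `a = (a_1,…,a_k)`: weakly decreasing sequences
`(i_1,…,i_k)` with `1 ≤ i_j ≤ a_j`, strictly decreasing where `a` strictly
decreases. -/
noncomputable def compatSet (k : ℕ) (a : Fin k → ℕ) : Finset (Fin k → ℕ) :=
  (Fintype.piFinset fun j => Finset.Icc 1 (a j)).filter fun i =>
    ∀ (j : ℕ) (h : j + 1 < k),
      i ⟨j + 1, h⟩ ≤ i ⟨j, Nat.lt_of_succ_lt h⟩ ∧
        (a ⟨j + 1, h⟩ < a ⟨j, Nat.lt_of_succ_lt h⟩ →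
          i ⟨j + 1, h⟩ < i ⟨j, Nat.lt_of_succ_lt h⟩)

/-- The slide polynomial `L_a = Σ_{i compatible with a} x_{i_1} ⋯ x_{i_k}`. -/
noncomputable def slide (k : ℕ) (a : Fin k → ℕ) : MvPolynomial ℕ ℤ :=
  ∑ i ∈ compatSet k a, ∏ j, X (i j - 1)

/-- `a ∈ QSeq_n`: positive entries, `a_1 = n`, consecutive differences in
`{0, 1}`. -/
def IsQSeq (n k : ℕ) (a : Fin k → ℕ) : Prop :=
  (∀ j, 1 ≤ a j) ∧ (∀ h : 0 < k, a ⟨0, h⟩ = n) ∧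
    ∀ (j : ℕ) (h : j + 1 < k),
      a ⟨j + 1, h⟩ ≤ a ⟨j, Nat.lt_of_succ_lt h⟩ ∧
        a ⟨j, Nat.lt_of_succ_lt h⟩ ≤ a ⟨j + 1, h⟩ + 1

/-!
`R_q L_a` is the sum, over the compatible sequences `i` avoiding the value `q`, of the monomials
of `i` with every entry above `q` lowered by one. Exchanging the values `p` and `p + 1` matches
the terms of `R_p L_a` with those of `R_{p+1} L_a`, except for the sequences that avoid `p + 1`
and have an entry `i_m = a_m = p`. Along a compatible sequence the slack `a_t - i_t` is weakly
increasing, so `i_m = a_m` forces `i_t = a_t` for all `t ≤ m`; as `a` descends from `n` in steps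
of at most one, such an `i` takes the value `p + 1` unless `p = n`. For `p = n` the surviving
sequences are those with `i_1 = n`, and they contribute `x_n L_{a'}`.
-/

open Finset

section Compatible

variable {K : ℕ} {a i : Fin K → ℕ}

theorem mem_compatSet_iff :
    i ∈ compatSet K a ↔
      (∀ j, 1 ≤ i j ∧ i j ≤ a j) ∧
        ∀ (j : ℕ) (h : j + 1 < K),
          i ⟨j + 1, h⟩ ≤ i ⟨j, Nat.lt_of_succ_lt h⟩ ∧
            (a ⟨j + 1, h⟩ < a ⟨j, Nat.lt_of_succ_lt h⟩ →
              i ⟨j + 1, h⟩ < i ⟨j, Nat.lt_of_succ_lt h⟩) := by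
  simp [compatSet, Fintype.mem_piFinset, Finset.mem_Icc]

theorem mem_range_swap_comp {u v x : ℕ} :
    x ∈ Set.range (Equiv.swap u v ∘ i) ↔ Equiv.swap u v x ∈ Set.range i := by
  simp only [Set.mem_range, Function.comp_apply, Equiv.swap_apply_eq_iff]

/-- Exchanging the values `p` and `p + 1` preserves all comparisons between the entries of `i`
as long as only one of the two values occurs. -/
theorem swap_comp_mem_compatSet {p : ℕ} (hi : i ∈ compatSet K a) (hp : 1 ≤ p)
    (hrange : p ∉ Set.range i ∨ p + 1 ∉ Set.range i) (hle : ∀ m, i m = p → p + 1 ≤ a m) :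
    Equiv.swap p (p + 1) ∘ i ∈ compatSet K a := by
  obtain ⟨hbound, hchain⟩ := mem_compatSet_iff.1 hi
  have hne : ∀ m m', i m = p → i m' ≠ p + 1 := by
    rintro m m' hm hm'
    rcases hrange with h | h
    exacts [h ⟨m, hm⟩, h ⟨m', hm'⟩]
  refine mem_compatSet_iff.2 ⟨fun j => ?_, fun j h => ?_⟩
  · have := hbound j
    have := hle j
    simp only [Function.comp_apply, Equiv.swap_apply_def]
    split_ifs <;> omega
  · have := hchain j h
    have := hne ⟨j, Nat.lt_of_succ_lt h⟩ ⟨j + 1, h⟩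
    have := hne ⟨j + 1, h⟩ ⟨j, Nat.lt_of_succ_lt h⟩
    simp only [Function.comp_apply, Equiv.swap_apply_def]
    split_ifs <;> omega

end Compatible

/-- The effect of `R q` on the indices of a monomial `x_{i_1} ⋯ x_{i_K}` avoiding `x_q`. -/
def shiftDown (q : ℕ) {K : ℕ} (i : Fin K → ℕ) : Fin K → ℕ :=
  fun j => if i j < q then i j else i j - 1

theorem shiftDown_swap_comp {p K : ℕ} {i : Fin K → ℕ} (h : p + 1 ∉ Set.range i) :
    shiftDown p (Equiv.swap p (p + 1) ∘ i) = shiftDown (p + 1) i := by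
  funext j
  have : i j ≠ p + 1 := fun hj => h ⟨j, hj⟩
  simp only [shiftDown, Function.comp_apply, Equiv.swap_apply_def]
  split_ifs <;> omega

theorem R_X (q m : ℕ) :
    R q (X m) = if m + 1 < q then X m else if m + 1 = q then 0 else X (m - 1) := by
  simp [_root_.R]

theorem R_prod_X (q : ℕ) {K : ℕ} (i : Fin K → ℕ) (hi : ∀ j, 1 ≤ i j) :
    R q (∏ j, X (i j - 1)) =
      if q ∈ Set.range i then 0 else ∏ j, X (shiftDown q i j - 1) := by
  rw [map_prod]
  split_ifs with h
  · obtain ⟨m, rfl⟩ := h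
    have := hi m
    exact prod_eq_zero (mem_univ m) (by rw [R_X, if_neg (by omega), if_pos (by omega)])
  · refine prod_congr rfl fun j _ => ?_
    have : i j ≠ q := fun hj => h ⟨j, hj⟩
    have := hi j
    rw [R_X, shiftDown]
    split_ifs <;> first | rfl | omega

theorem R_slide (q : ℕ) {K : ℕ} (a : Fin K → ℕ) :
    R q (slide K a) =
      ∑ i ∈ (compatSet K a).filter (q ∉ Set.range ·), ∏ j, X (shiftDown q i j - 1) := by
  rw [slide, map_sum, sum_filter]
  refine sum_congr rfl fun i hi => ?_
  rw [R_prod_X q i fun j => ((mem_compatSet_iff.1 hi).1 j).1]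
  by_cases h : q ∈ Set.range i <;> simp [h]

theorem sum_filter_shiftDown_succ_eq {p K : ℕ} (a : Fin K → ℕ) (hp : 1 ≤ p) :
    ∑ i ∈ (compatSet K a).filter (fun i => p + 1 ∉ Set.range i ∧ ¬ ∃ m, i m = p ∧ a m = p),
        (∏ j, X (shiftDown (p + 1) i j - 1) : MvPolynomial ℕ ℤ) =
      ∑ i ∈ (compatSet K a).filter (p ∉ Set.range ·), ∏ j, X (shiftDown p i j - 1) := by
  have hswap : ∀ x, Equiv.swap p (p + 1) x = p ↔ x = p + 1 := fun x => by
    rw [Equiv.swap_apply_eq_iff, Equiv.swap_apply_left]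
  refine sum_nbij' (Equiv.swap p (p + 1) ∘ ·) (Equiv.swap p (p + 1) ∘ ·) ?_ ?_ ?_ ?_ ?_
  · intro i hi
    simp only [mem_filter, not_exists, not_and] at hi ⊢
    obtain ⟨hi, hne, htouch⟩ := hi
    refine ⟨swap_comp_mem_compatSet hi hp (Or.inr hne) fun m hm => ?_, ?_⟩
    · have := ((mem_compatSet_iff.1 hi).1 m).2
      have := htouch m hm
      omega
    · rwa [mem_range_swap_comp, Equiv.swap_apply_left]
  · intro i hi
    simp only [mem_filter, not_exists, not_and] at hi ⊢
    obtain ⟨hi, hne⟩ := hi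
    refine ⟨swap_comp_mem_compatSet hi hp (Or.inl hne) fun m hm => absurd ⟨m, hm⟩ hne, ?_, ?_⟩
    · rwa [mem_range_swap_comp, Equiv.swap_apply_right]
    · intro m hm ham
      have := ((mem_compatSet_iff.1 hi).1 m).2
      rw [Function.comp_apply, hswap] at hm
      omega
  · intro i _
    funext m
    simp
  · intro i _
    funext m
    simp
  · intro i hi
    simp only [mem_filter] at hi
    rw [shiftDown_swap_comp hi.2.1]

theorem R_succ_sub_R_slide_eq_sum {p K : ℕ} (a : Fin K → ℕ) (hp : 1 ≤ p) :
    R (p + 1) (slide K a) - R p (slide K a) =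
      ∑ i ∈ (compatSet K a).filter (fun i => p + 1 ∉ Set.range i ∧ ∃ m, i m = p ∧ a m = p),
        ∏ j, X (shiftDown (p + 1) i j - 1) := by
  rw [R_slide, R_slide, ← sum_filter_shiftDown_succ_eq a hp,
    ← sum_filter_add_sum_filter_not ((compatSet K a).filter (p + 1 ∉ Set.range ·))
      (fun i => ∃ m, i m = p ∧ a m = p), filter_filter, filter_filter, add_sub_cancel_right]

namespace IsQSeq

variable {n k : ℕ} {a : Fin (k + 1) → ℕ}

theorem apply_zero (ha : IsQSeq n (k + 1) a) : a 0 = n :=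
  ha.2.1 k.succ_pos

theorem one_le (ha : IsQSeq n (k + 1) a) : 1 ≤ n :=
  ha.apply_zero ▸ ha.1 0

theorem succ_le (ha : IsQSeq n (k + 1) a) (j : Fin k) : a j.succ ≤ a j.castSucc :=
  (ha.2.2 j j.succ.2).1

theorem le_succ_add_one (ha : IsQSeq n (k + 1) a) (j : Fin k) : a j.castSucc ≤ a j.succ + 1 :=
  (ha.2.2 j j.succ.2).2

theorem apply_le (ha : IsQSeq n (k + 1) a) (j : Fin (k + 1)) : a j ≤ n :=
  ha.apply_zero ▸ Fin.antitone_iff_succ_le.2 ha.succ_le (Fin.zero_le j)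

theorem exists_eq_of_le (ha : IsQSeq n (k + 1) a) {m : Fin (k + 1)} {c : ℕ}
    (hmc : a m ≤ c) (hcn : c ≤ n) : ∃ t ≤ m, a t = c := by
  induction m using Fin.induction with
  | zero => exact ⟨0, le_rfl, by have := ha.apply_zero; omega⟩
  | succ j ih =>
    by_cases hj : a j.castSucc ≤ c
    · obtain ⟨t, ht, rfl⟩ := ih hj
      exact ⟨t, ht.trans (Fin.castSucc_le_succ j), rfl⟩
    · exact ⟨j.succ, le_rfl, by have := ha.le_succ_add_one j; omega⟩

variable {i : Fin (k + 1) → ℕ}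

/-- The slack `a - i` of a compatible sequence can only grow, since `i` must drop whenever `a`
does. -/
theorem monotone_sub (ha : IsQSeq n (k + 1) a) (hi : i ∈ compatSet (k + 1) a) :
    Monotone fun t => a t - i t := by
  obtain ⟨hbound, hchain⟩ := mem_compatSet_iff.1 hi
  refine Fin.monotone_iff_le_succ.2 fun j => ?_
  have hstep : i j.succ ≤ i j.castSucc ∧ (a j.succ < a j.castSucc → i j.succ < i j.castSucc) :=
    hchain j j.succ.2
  have := ha.succ_le j
  have := ha.le_succ_add_one j
  have := hbound j.succ
  have := hbound j.castSucc
  change a j.castSucc - i j.castSucc ≤ a j.succ - i j.succ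
  omega

theorem eq_of_le_of_eq (ha : IsQSeq n (k + 1) a) (hi : i ∈ compatSet (k + 1) a)
    {t m : Fin (k + 1)} (htm : t ≤ m) (hm : i m = a m) : i t = a t := by
  have : a t - i t ≤ a m - i m := ha.monotone_sub hi htm
  have := ((mem_compatSet_iff.1 hi).1 t).2
  omega

theorem notMem_range_succ_and_exists_iff (ha : IsQSeq n (k + 1) a)
    (hi : i ∈ compatSet (k + 1) a) {p : ℕ} :
    (p + 1 ∉ Set.range i ∧ ∃ m, i m = p ∧ a m = p) ↔ p = n ∧ i 0 = n := by
  have hin : ∀ m, i m ≤ n := fun m => (((mem_compatSet_iff.1 hi).1 m).2).trans (ha.apply_le m)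
  constructor
  · rintro ⟨hne, m, him, ham⟩
    have hm : i m = a m := him.trans ham.symm
    refine ⟨?_, (ha.eq_of_le_of_eq hi (Fin.zero_le m) hm).trans ha.apply_zero⟩
    by_contra hpn
    obtain ⟨t, htm, hat⟩ :=
      ha.exists_eq_of_le (m := m) (c := p + 1) (by omega) (by have := ha.apply_le m; omega)
    exact hne ⟨t, (ha.eq_of_le_of_eq hi htm hm).trans hat⟩
  · rintro ⟨rfl, h0⟩
    exact ⟨fun ⟨m, hm⟩ => by have := hin m; omega, 0, h0, ha.apply_zero⟩

theorem cons_mem_compatSet_iff (ha : IsQSeq n (k + 1) a) {i' : Fin k → ℕ} :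
    Fin.cons n i' ∈ compatSet (k + 1) a ↔ i' ∈ compatSet k (Fin.tail a) := by
  rw [mem_compatSet_iff, mem_compatSet_iff]
  constructor
  · rintro ⟨hbound, hchain⟩
    exact ⟨fun j => hbound j.succ, fun j h => hchain (j + 1) (by omega)⟩
  · rintro ⟨hbound, hchain⟩
    refine ⟨Fin.cases ⟨ha.one_le, ha.apply_zero.ge⟩ hbound, ?_⟩
    rintro (_ | j) h
    · have h1 : i' ⟨0, _⟩ ≤ a ⟨1, h⟩ := (hbound ⟨0, by omega⟩).2
      have h2 : a ⟨1, h⟩ ≤ a 0 := ha.succ_le ⟨0, by omega⟩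
      have := ha.apply_zero
      change i' ⟨0, _⟩ ≤ n ∧ (a ⟨1, h⟩ < a 0 → i' ⟨0, _⟩ < n)
      omega
    · exact hchain j (by omega)

theorem sum_filter_apply_zero_eq (ha : IsQSeq n (k + 1) a) :
    ∑ i ∈ (compatSet (k + 1) a).filter (fun i => i 0 = n),
        ∏ j, X (shiftDown (n + 1) i j - 1) =
      X (n - 1) * slide k (Fin.tail a) := by
  rw [slide, mul_sum]
  refine sum_nbij' Fin.tail (Fin.cons (α := fun _ => ℕ) n) ?_ ?_ ?_ ?_ ?_
  · intro i hi
    simp only [mem_filter] at hi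
    rw [← ha.cons_mem_compatSet_iff, ← hi.2, Fin.cons_self_tail]
    exact hi.1
  · intro i' hi'
    exact mem_filter.2 ⟨ha.cons_mem_compatSet_iff.2 hi', Fin.cons_zero _ _⟩
  · intro i hi
    simp only [mem_filter] at hi
    rw [← hi.2, Fin.cons_self_tail]
  · intro i' _
    exact Fin.tail_cons _ _
  · intro i hi
    simp only [mem_filter] at hi
    have hshift : shiftDown (n + 1) i = i := funext fun j => by
      have := ((mem_compatSet_iff.1 hi.1).1 j).2.trans (ha.apply_le j)
      simp only [shiftDown]
      split_ifs <;> omega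
    rw [hshift, Fin.prod_univ_succ, hi.2]
    rfl

theorem R_succ_sub_R_slide (ha : IsQSeq n (k + 1) a) {p : ℕ} (hp : 1 ≤ p) :
    R (p + 1) (slide (k + 1) a) - R p (slide (k + 1) a) =
      if p = n then X (n - 1) * slide k (Fin.tail a) else 0 := by
  rw [R_succ_sub_R_slide_eq_sum a hp,
    filter_congr fun i hi => ha.notMem_range_succ_and_exists_iff hi]
  split_ifs with hpn
  · subst hpn
    simpa only [true_and] using ha.sum_filter_apply_zero_eq
  · simp [hpn]

end IsQSeq

theorem trim_fundamental_general (n k : ℕ) (a : Fin (k + 1) → ℕ)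
    (ha : IsQSeq n (k + 1) a) :
    T n (slide (k + 1) a) = slide k (fun j => a j.succ) ∧
      ∀ j, 1 ≤ j → j ≠ n → T j (slide (k + 1) a) = 0 := by
  refine ⟨?_, fun p hp hpn => ?_⟩
  · rw [T, ha.R_succ_sub_R_slide ha.one_le, if_pos rfl, X_mul_divMonomial]
    rfl
  · rw [T, ha.R_succ_sub_R_slide hp, if_neg hpn, zero_divMonomial]

/-- For `a = (a_1,…,a_{k+1}) ∈ QSeq_n`:
`T_n L_a = L_{a'}` where `a' = (a_2,…,a_{k+1})`, and `T_j L_a = 0` for every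
other `j ≥ 1`. -/
theorem trim_fundamental (n k : ℕ) (hn : 1 ≤ n) (a : Fin (k + 1) → ℕ)
    (ha : IsQSeq n (k + 1) a) :
    T n (slide (k + 1) a) = slide k (fun j => a j.succ) ∧
      ∀ j, 1 ≤ j → j ≠ n → T j (slide (k + 1) a) = 0 :=
  trim_fundamental_general n k a ha
end

section
/- For any monomial x^c with exponent vector c = (c_1,...,c_n) satisfying c_{m+1} = c_{m+2} = ... = 0 (i.e., only the first m variables appear), the m-forest polynomial of the unique m-indexed forest with code c equals the monomial x^c itself. -/
open MvPolynomial

/-- `(m+1)`-ary rooted plane trees: each node has `0` or `m+1` ordered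
children. -/
inductive MTree (m : ℕ) : Type
  | leaf : MTree m
  | node : (Fin (m + 1) → MTree m) → MTree m

/-- Number of leaves. -/
def MTree.mleaves {m : ℕ} : MTree m → ℕ
  | .leaf => 1
  | .node ch => ∑ i, (ch i).mleaves

/-- The number of leaves strictly to the left of the `i`-th child. -/
def childOffset {m : ℕ} (ch : Fin (m + 1) → MTree m) (i : Fin (m + 1)) : ℕ :=
  ∑ j ∈ Finset.univ.filter (· < i), (ch j).mleaves

/-- The code of a single `(m+1)`-ary tree whose leftmost leaf is labeled `k`
(1-based leaf labels): every internal node `v` contributes `1` at the index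
`ρ(v)`, the label of the leaf reached from `v` along leftmost edges. -/
noncomputable def mcode {m : ℕ} : MTree m → ℕ → (ℕ →₀ ℕ)
  | .leaf, _ => 0
  | .node ch, k => Finsupp.single k 1 + ∑ i, mcode (ch i) (k + childOffset ch i)

/-- Generating function of the compatible labelings of a tree whose leftmost
leaf is labeled `k`, with all labels bounded below by `b`: labels `κ(v)` are
positive integers with `κ(v) ≤ ρ(v)`, `κ(v) ≡ ρ(v) (mod m)`, and
`κ(v) ≤ κ(v_i) - i` for each internal `i`-th child `v_i`. -/
noncomputable def mgen (m : ℕ) : MTree m → ℕ → ℕ → MvPolynomial ℕ ℤ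
  | .leaf, _, _ => 1
  | .node ch, k, b =>
      ∑ c ∈ (Finset.Icc 1 k).filter (fun c => c % m = k % m ∧ b ≤ c),
        X c * ∏ i, mgen m (ch i) (k + childOffset ch i) (c + (i : ℕ))

/-- The leftmost leaf label (1-based) of the `i`-th tree of a forest. -/
def moffset {m : ℕ} (F : ℕ → MTree m) (i : ℕ) : ℕ :=
  1 + ∑ j ∈ Finset.range i, (F j).mleaves

/-- The `m`-forest polynomial `P_F = Σ_{κ ∈ Comp(F)} Π_v x_{κ(v)}`
(the variable `x_c` is `X c`, `c ≥ 1`). -/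
noncomputable def mforestPoly {m : ℕ} (F : ℕ → MTree m) : MvPolynomial ℕ ℤ :=
  ∏ᶠ i, mgen m (F i) (moffset F i) 1

/-- The code of an `m`-indexed forest. -/
noncomputable def mcodeF {m : ℕ} (F : ℕ → MTree m) : ℕ →₀ ℕ :=
  ∑ᶠ i, mcode (F i) (moffset F i)

/-! A label `κ(v)` satisfies `1 ≤ κ(v) ≤ ρ(v)` and `κ(v) ≡ ρ(v) (mod m)`, so a node with
`ρ(v) ≤ m` only admits `κ(v) = ρ(v)`. If the code vanishes above `m`, every internal node has
`ρ(v) ≤ m`, and the constraints `κ(v) + i ≤ κ(v_i)` are automatic for `κ = ρ` because the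
`i`-th child has at least `i` leaves to its left. Hence each tree has the single compatible
labeling `κ = ρ`, whose weight is `x^c`. -/

lemma MTree.one_le_mleaves {m : ℕ} (t : MTree m) : 1 ≤ t.mleaves := by
  induction t with
  | leaf => exact le_rfl
  | node ch ih =>
    exact (ih 0).trans (Finset.single_le_sum (f := fun i => (ch i).mleaves)
      (fun _ _ => zero_le) (Finset.mem_univ 0))

lemma le_childOffset {m : ℕ} (ch : Fin (m + 1) → MTree m) (i : Fin (m + 1)) :
    (i : ℕ) ≤ childOffset ch i := by
  have hcard : (Finset.univ.filter (· < i)).card = i := by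
    rw [Finset.filter_gt_eq_Iio, Fin.card_Iio]
  rw [childOffset, ← hcard]
  simpa using
    Finset.card_nsmul_le_sum _ (fun j => (ch j).mleaves) 1 fun j _ => (ch j).one_le_mleaves

lemma single_le_mcode_node {m : ℕ} (ch : Fin (m + 1) → MTree m) (k : ℕ) :
    Finsupp.single k 1 ≤ mcode (.node ch) k := by
  rw [mcode]
  exact le_self_add

lemma mcode_child_le_mcode_node {m : ℕ} (ch : Fin (m + 1) → MTree m) (k : ℕ) (i : Fin (m + 1)) :
    mcode (ch i) (k + childOffset ch i) ≤ mcode (.node ch) k := by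
  rw [mcode]
  exact (Finset.single_le_sum (f := fun j => mcode (ch j) (k + childOffset ch j))
    (fun _ _ => zero_le) (Finset.mem_univ i)).trans le_add_self

lemma eq_of_modEq_of_le_modulus {m c k : ℕ} (hc : 1 ≤ c) (hck : c ≤ k) (hkm : k ≤ m)
    (h : c ≡ k [MOD m]) : c = k :=
  hck.eq_or_lt.resolve_right fun hlt => by
    have := h.add_le_of_lt hlt
    omega

lemma filter_Icc_modEq_eq_singleton {m k b : ℕ} (hk : 1 ≤ k) (hbk : b ≤ k) (hkm : k ≤ m) :
    (Finset.Icc 1 k).filter (fun c => c % m = k % m ∧ b ≤ c) = {k} := by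
  ext c
  simp only [Finset.mem_filter, Finset.mem_Icc, Finset.mem_singleton]
  constructor
  · rintro ⟨⟨hc, hck⟩, hmod, -⟩
    exact eq_of_modEq_of_le_modulus hc hck hkm hmod
  · rintro rfl
    exact ⟨⟨hk, le_rfl⟩, rfl, hbk⟩

theorem mgen_eq_monomial_mcode {m : ℕ} (t : MTree m) {k b : ℕ} (hk : 1 ≤ k) (hbk : b ≤ k)
    (hc : ∀ i, m < i → mcode t k i = 0) : mgen m t k b = monomial (mcode t k) 1 := by
  induction t generalizing k b with
  | leaf => simp [mgen, mcode]
  | node ch ih =>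
    have hkm : k ≤ m := by
      by_contra! hmk
      simpa using (single_le_mcode_node ch k k).trans (hc k hmk).le
    have hchild (i : Fin (m + 1)) : mgen m (ch i) (k + childOffset ch i) (k + i) =
        monomial (mcode (ch i) (k + childOffset ch i)) 1 :=
      ih i (by omega) (by have := le_childOffset ch i; omega) fun j hj =>
        Nat.eq_zero_of_le_zero ((mcode_child_le_mcode_node ch k i j).trans (hc j hj).le)
    rw [mgen, filter_Icc_modEq_eq_singleton hk hbk hkm, Finset.sum_singleton,
      Finset.prod_congr rfl fun i _ => hchild i, ← monomial_sum_one, X, monomial_mul, one_mul,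
      mcode]

lemma finprod_monomial_one {σ ι R : Type*} [CommSemiring R] {f : ι → σ →₀ ℕ}
    (hf : (Function.support f).Finite) :
    ∏ᶠ i, monomial (f i) (1 : R) = monomial (∑ᶠ i, f i) 1 := by
  classical
  rw [finsum_eq_sum f hf, monomial_sum_one]
  exact finprod_eq_prod_of_mulSupport_subset _ fun i hi =>
    hf.mem_toFinset.2 fun h0 => hi (by simp [h0])

lemma support_mcode_subset {m : ℕ} (F : ℕ → MTree m) :
    (Function.support fun i => mcode (F i) (moffset F i)) ⊆ {i | F i ≠ .leaf} :=
  fun i hi hleaf => hi (by simp only [hleaf, mcode])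

theorem mforest_poly_of_small_code_general (m : ℕ) (F : ℕ → MTree m)
    (hF : {i | F i ≠ MTree.leaf}.Finite)
    (hc : ∀ i, m < i → mcodeF F i = 0) :
    mforestPoly F = monomial (mcodeF F) 1 := by
  have hfin := hF.subset (support_mcode_subset F)
  have htree (i : ℕ) :
      mgen m (F i) (moffset F i) 1 = monomial (mcode (F i) (moffset F i)) 1 :=
    mgen_eq_monomial_mcode (F i) (Nat.le_add_right 1 _) (Nat.le_add_right 1 _) fun j hj =>
      Nat.eq_zero_of_le_zero
        ((single_le_finsum i hfin (fun _ => zero_le) j).trans (hc j hj).le)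
  rw [mforestPoly, finprod_congr htree, finprod_monomial_one hfin, mcodeF]

/-- If the code of an `m`-indexed forest is supported on the
first `m` indices (i.e. `c_i = 0` for `i > m`), then its `m`-forest polynomial
is exactly the monomial `x^c`. -/
theorem mforest_poly_of_small_code (m : ℕ) (hm : 1 ≤ m) (F : ℕ → MTree m)
    (hF : {i | F i ≠ MTree.leaf}.Finite)
    (hc : ∀ i, m < i → mcodeF F i = 0) :
    mforestPoly F = monomial (mcodeF F) 1 :=
  mforest_poly_of_small_code_general m F hF hc
end
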